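/- Conservativity of MLL_J over MLL: if ⊢ Γ, Θ_J is provable in MLL_J with Γ nonempty (Θ_J consisting of J^⊥-formulas), then the erased sequent ⊢ |Γ|_J is provable in MLL. -/
import Mathlib


inductive MLL where
  | atom : ℕ → MLL
  | natom : ℕ → MLL
  | tensor : MLL → MLL → MLL
  | parr : MLL → MLL → MLL
deriving DecidableEq

/-- `F` is a J-formula: the jump atom `j` or its negation. -/
def MLL.isJF (j : ℕ) : MLL → Prop
  | .atom a => a = j
  | .natom a => a = j
  | _ => False

/-- MLL_J formulas: F_J = A | F_J ⅋ F_J | F_J ⊗ F_J | F_J ⅋ J^⊥ | F_J ⊗ J,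
where A ranges over (possibly negated) atoms distinct from the jump atom `j`. -/
inductive MLL.IsMLLJ (j : ℕ) : MLL → Prop
  | atom : ∀ a, a ≠ j → MLL.IsMLLJ j (.atom a)
  | natom : ∀ a, a ≠ j → MLL.IsMLLJ j (.natom a)
  | parr : ∀ F G, MLL.IsMLLJ j F → MLL.IsMLLJ j G → MLL.IsMLLJ j (.parr F G)
  | tensor : ∀ F G, MLL.IsMLLJ j F → MLL.IsMLLJ j G → MLL.IsMLLJ j (.tensor F G)
  | parrJ : ∀ F, MLL.IsMLLJ j F → MLL.IsMLLJ j (.parr F (.natom j))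
  | tensorJ : ∀ F, MLL.IsMLLJ j F → MLL.IsMLLJ j (.tensor F (.atom j))

/-- Erasure of the jump atom `j` in a formula. -/
def MLL.erase (j : ℕ) : MLL → MLL
  | .tensor F G =>
      if G = .atom j ∨ G = .natom j then MLL.erase j F
      else .tensor (MLL.erase j F) (MLL.erase j G)
  | .parr F G =>
      if G = .atom j ∨ G = .natom j then MLL.erase j F
      else .parr (MLL.erase j F) (MLL.erase j G)
  | F => F

/-- `F` contains an occurrence of the atom `j` (as `J` or `J^⊥`). -/
def MLL.containsJ (j : ℕ) : MLL → Prop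
  | .atom a => a = j
  | .natom a => a = j
  | .tensor F G => MLL.containsJ j F ∨ MLL.containsJ j G
  | .parr F G => MLL.containsJ j F ∨ MLL.containsJ j G

/-- The MLL_J sequent calculus (sequents are lists of formulas up to exchange).
The jump atom `j` is kept separate: the J-axiom ⊢ J, J^⊥ only occurs built into
the ⊗_J rule, and J^⊥ can only be used through the ⅋_{J^⊥} rule. -/
inductive ProvJ (j : ℕ) : List MLL → Prop
  | exch : ∀ Γ Δ, Γ.Perm Δ → ProvJ j Γ → ProvJ j Δ
  | ax : ∀ a, a ≠ j → ProvJ j [.atom a, .natom a]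
  | parr : ∀ Γ F G, ¬ MLL.isJF j F → ¬ MLL.isJF j G →
      ProvJ j (F :: G :: Γ) → ProvJ j (.parr F G :: Γ)
  | tensor : ∀ Γ Δ F G, ¬ MLL.isJF j F → ¬ MLL.isJF j G →
      ProvJ j (F :: Γ) → ProvJ j (G :: Δ) → ProvJ j (.tensor F G :: (Γ ++ Δ))
  | tensorJ : ∀ Γ F, ¬ MLL.isJF j F →
      ProvJ j (F :: Γ) → ProvJ j (.tensor F (.atom j) :: .natom j :: Γ)
  | parrJ : ∀ Γ F, ¬ MLL.isJF j F →
      ProvJ j (F :: .natom j :: Γ) → ProvJ j (.parr F (.natom j) :: Γ)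

/-- The MLL sequent calculus over non-J atoms. -/
inductive ProvM (j : ℕ) : List MLL → Prop
  | exch : ∀ Γ Δ, Γ.Perm Δ → ProvM j Γ → ProvM j Δ
  | ax : ∀ a, a ≠ j → ProvM j [.atom a, .natom a]
  | parr : ∀ Γ F G, ProvM j (F :: G :: Γ) → ProvM j (.parr F G :: Γ)
  | tensor : ∀ Γ Δ F G, ProvM j (F :: Γ) → ProvM j (G :: Δ) →
      ProvM j (.tensor F G :: (Γ ++ Δ))

lemma ne_natom_of_not_isJF {j : ℕ} {F : MLL} (h : ¬ MLL.isJF j F) :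
    F ≠ MLL.natom j := by
  rintro rfl; exact h rfl

lemma ne_atom_of_not_isJF {j : ℕ} {F : MLL} (h : ¬ MLL.isJF j F) :
    F ≠ MLL.atom j := by
  rintro rfl; exact h rfl

/-- Erasure of a sequent: drop the `J^⊥` formulas and erase the rest. -/
def eraseSeq (j : ℕ) (Δ : List MLL) : List MLL :=
  (Δ.filter (fun F => F ≠ MLL.natom j)).map (MLL.erase j)

lemma ProvJ.eraseSeq_prov {j : ℕ} {Δ : List MLL} (h : ProvJ j Δ) :
    ProvM j (eraseSeq j Δ) := by
  induction h with
  | exch Γ Δ hp _ ih => exact ProvM.exch _ _ ((hp.filter _).map _) ih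
  | ax a ha =>
      have h1 : MLL.atom a ≠ MLL.natom j := by simp
      have h2 : MLL.natom a ≠ MLL.natom j := by simp [ha]
      simpa [eraseSeq, h1, h2, MLL.erase] using ProvM.ax a ha
  | parr Γ F G hF hG _ ih =>
      have hF' := ne_natom_of_not_isJF hF
      have hG' := ne_natom_of_not_isJF hG
      have hGa := ne_atom_of_not_isJF hG
      have := ProvM.parr _ _ _ (by simpa [eraseSeq, hF', hG'] using ih)
      simpa [eraseSeq, hF', hG', hGa, MLL.erase] using this
  | tensor Γ Δ F G hF hG _ _ ihF ihG =>
      have hF' := ne_natom_of_not_isJF hF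
      have hG' := ne_natom_of_not_isJF hG
      have hGa := ne_atom_of_not_isJF hG
      have := ProvM.tensor _ _ _ _ (by simpa [eraseSeq, hF'] using ihF)
        (by simpa [eraseSeq, hG'] using ihG)
      simpa [eraseSeq, hF', hG', hGa, MLL.erase, List.filter_append] using this
  | tensorJ Γ F hF _ ih =>
      have hF' := ne_natom_of_not_isJF hF
      simpa [eraseSeq, hF', MLL.erase] using ih
  | parrJ Γ F hF _ ih =>
      have hF' := ne_natom_of_not_isJF hF
      simpa [eraseSeq, hF', MLL.erase] using ih

/-- Conservativity of MLL_J over MLL: if ⊢ Γ, Θ_J is provable in MLL_J with Γ a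
nonempty list of non-J formulas and Θ_J consisting of J^⊥-formulas, then the
erased sequent ⊢ |Γ|_J is provable in MLL. -/
theorem ProvJ.conservative (j : ℕ) (Γ Θ : List MLL)
    (h : ProvJ j (Γ ++ Θ))
    (hΘ : ∀ F ∈ Θ, F = MLL.natom j)
    (hΓJ : ∀ F ∈ Γ, ¬ MLL.isJF j F)
    (hne : Γ ≠ []) :
    ProvM j (Γ.map (MLL.erase j)) := by
  have key := h.eraseSeq_prov
  have hfilt : (Γ ++ Θ).filter (fun F => F ≠ MLL.natom j) = Γ := by
    rw [List.filter_append]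
    have h1 : Γ.filter (fun F => F ≠ MLL.natom j) = Γ :=
      List.filter_eq_self.2 fun F hF => by
        simpa using ne_natom_of_not_isJF (hΓJ F hF)
    have h2 : Θ.filter (fun F => F ≠ MLL.natom j) = [] := by
      simp only [List.filter_eq_nil_iff]
      intro F hF
      simp [hΘ F hF]
    rw [h1, h2, List.append_nil]
  rwa [eraseSeq, hfilt] at key
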